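/- arXiv:1511.02475 — 3 statements merged into one kernel-verified Lean document; each statement's English description precedes it below -/
import Mathlib

section
/- Let G be a cubic graph (3-regular multigraph without loops) containing at most two bridges. Then G has a perfect matching. -/
open scoped Classical

/-- A finite undirected multigraph (possibly with loops and parallel edges),
given by a vertex type, an edge type, and an endpoints map. -/
structure Multigraph where
  V : Type
  E : Type
  [fintV : Fintype V]
  [fintE : Fintype E]
  [decV : DecidableEq V]
  [decE : DecidableEq E]
  ends : E → Sym2 V

namespace Multigraph

attribute [instance] Multigraph.fintV Multigraph.fintE Multigraph.decV Multigraph.decE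

variable (G : Multigraph)

/-- The number of times `v` occurs as an endpoint of `e` (2 for a loop at `v`). -/
def incCount (v : G.V) (e : G.E) : ℕ :=
  if G.ends e = Sym2.diag v then 2 else if v ∈ G.ends e then 1 else 0

/-- Degree of a vertex (a loop contributes 2). -/
def degree (v : G.V) : ℕ := ∑ e : G.E, G.incCount v e

/-- The set `∂_G(v)` of edges incident to `v`. -/
def star (v : G.V) : Finset G.E := Finset.univ.filter fun e => v ∈ G.ends e

/-- No loops. -/
def Loopless : Prop := ∀ e : G.E, ¬ (G.ends e).IsDiag

/-- A cubic graph: loopless and 3-regular (parallel edges allowed). -/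
def Cubic : Prop := G.Loopless ∧ ∀ v : G.V, G.degree v = 3

/-- A cubic pseudo-graph: 3-regular, loops and parallel edges allowed. -/
def CubicPseudo : Prop := ∀ v : G.V, G.degree v = 3

/-- A simple graph: no loops and no parallel edges. -/
def Simple : Prop := G.Loopless ∧ ∀ e e' : G.E, G.ends e = G.ends e' → e = e'

/-- Two edges are adjacent if they are distinct and share an endpoint. -/
def EdgeAdj (e e' : G.E) : Prop :=
  e ≠ e' ∧ ∃ v : G.V, v ∈ G.ends e ∧ v ∈ G.ends e'

/-- A matching: a set of pairwise non-adjacent edges. -/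
def IsMatching (M : Set G.E) : Prop :=
  ∀ e ∈ M, ∀ e' ∈ M, e ≠ e' → ¬ ∃ v : G.V, v ∈ G.ends e ∧ v ∈ G.ends e'

/-- A perfect matching: a matching covering every vertex. -/
def IsPerfectMatching (M : Set G.E) : Prop :=
  G.IsMatching M ∧ ∀ v : G.V, ∃ e ∈ M, v ∈ G.ends e

/-- Degree of `v` within the spanning subgraph with edge set `A`. -/
noncomputable def degIn (A : Set G.E) (v : G.V) : ℕ :=
  ∑ e : G.E, if e ∈ A then G.incCount v e else 0

/-- `A` is the edge set of a `k`-factor: a spanning `k`-regular subgraph. -/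
def IsKFactor (k : ℕ) (A : Set G.E) : Prop := ∀ v : G.V, G.degIn A v = k

/-- `A` is the edge set of an even subgraph. -/
def EvenSubgraph (A : Set G.E) : Prop := ∀ v : G.V, Even (G.degIn A v)

/-- Reachability using only edges from `A`. -/
def Reach (A : Set G.E) : G.V → G.V → Prop :=
  Relation.ReflTransGen fun a b => ∃ e ∈ A, G.ends e = s(a, b)

/-- Connectedness. -/
def Connected : Prop := ∀ u v : G.V, G.Reach Set.univ u v

/-- A bridge: an edge whose removal disconnects its endpoints. -/
def IsBridge (e : G.E) : Prop :=
  ∀ u w : G.V, G.ends e = s(u, w) → ¬ G.Reach {e' | e' ≠ e} u w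

/-- The chromatic index: least number of colors of a proper edge coloring. -/
noncomputable def chromaticIndex : ℕ :=
  sInf {n | ∃ c : G.E → Fin n, ∀ e e', G.EdgeAdj e e' → c e ≠ c e'}

/-- A triangle on distinct vertices `u, v, w` with edges `e₁, e₂, e₃`. -/
def IsTriangle (e₁ e₂ e₃ : G.E) (u v w : G.V) : Prop :=
  u ≠ v ∧ v ≠ w ∧ u ≠ w ∧
    G.ends e₁ = s(u, v) ∧ G.ends e₂ = s(v, w) ∧ G.ends e₃ = s(u, w)

/-- Triangle-freeness. -/
def TriangleFree : Prop :=
  ¬ ∃ (e₁ e₂ e₃ : G.E) (u v w : G.V), G.IsTriangle e₁ e₂ e₃ u v w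

/-- An isomorphism of multigraphs. -/
structure Iso (G H : Multigraph) where
  vEquiv : G.V ≃ H.V
  eEquiv : G.E ≃ H.E
  ends_map : ∀ e : G.E, H.ends (eEquiv e) = (G.ends e).map vEquiv

/-- `G` and `H` are isomorphic. -/
def IsIsomorphicTo (G H : Multigraph) : Prop := Nonempty (Iso G H)

/-- An `H`-coloring of `G`: `f(∂_G(x)) = ∂_H(y)` for every vertex `x` of `G`,
some vertex `y` of `H`. -/
def IsHColoring (G H : Multigraph) (f : G.E → H.E) : Prop :=
  ∀ x : G.V, ∃ y : H.V, (G.star x).image f = H.star y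

/-- The set `V(f)` of vertices of `G` satisfying the `H`-coloring condition under `f`. -/
def colVerts (G H : Multigraph) (f : G.E → H.E) : Set G.V :=
  {x : G.V | ∃ y : H.V, (G.star x).image f = H.star y}

/-- The incidence multiset of a vertex: each incident edge with its multiplicity
(a loop occurs twice). -/
noncomputable def incMultiset (v : G.V) : Multiset G.E :=
  ∑ e : G.E, (G.incCount v e) • ({e} : Multiset G.E)

end Multigraph

/-- The Petersen graph. -/
def Petersen : Multigraph where
  V := Fin 10
  E := {p : Sym2 (Fin 10) //
    p ∈ ({s(0,1), s(1,2), s(2,3), s(3,4), s(4,0),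
          s(0,5), s(1,6), s(2,7), s(3,8), s(4,9),
          s(5,7), s(7,9), s(9,6), s(6,8), s(8,5)} : Finset (Sym2 (Fin 10)))}
  ends := Subtype.val

/-- The Sylvester graph `S` on 10 vertices: a central vertex 0 joined by three
bridges to three end-blocks; each end-block is a 3-vertex multigraph whose two
non-root vertices are joined by a pair of parallel edges. -/
def SylvesterS : Multigraph where
  V := Fin 10
  E := Fin 15
  ends := ![s(0,1), s(1,2), s(1,3), s(2,3), s(2,3),
            s(0,4), s(4,5), s(4,6), s(5,6), s(5,6),
            s(0,7), s(7,8), s(7,9), s(8,9), s(8,9)]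

/-- The Sylvester simple graph `S₁₆` on 16 vertices: central vertex 0 joined by
bridges to three 5-vertex end-blocks with edges
(v1,v2),(v1,v3),(v1,v4),(v2,v3),(v2,v4),(v3,v5),(v4,v5). -/
def Sylvester16 : Multigraph where
  V := Fin 16
  E := {p : Sym2 (Fin 16) //
    p ∈ ({s(1,2), s(1,3), s(1,4), s(2,3), s(2,4), s(3,5), s(4,5), s(0,5),
          s(6,7), s(6,8), s(6,9), s(7,8), s(7,9), s(8,10), s(9,10), s(0,10),
          s(11,12), s(11,13), s(11,14), s(12,13), s(12,14), s(13,15), s(14,15),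
          s(0,15)} : Finset (Sym2 (Fin 16)))}
  ends := Subtype.val

/-- The graph `S'` on 10 vertices: two 5-vertex blocks, each consisting of a
triangle v1v2v3 together with edges (v1,v4),(v2,v4),(v3,v5),(v4,v5), joined by
a bridge between the two degree-2 vertices. -/
def Sprime : Multigraph where
  V := Fin 10
  E := {p : Sym2 (Fin 10) //
    p ∈ ({s(0,1), s(0,2), s(1,2), s(0,3), s(1,3), s(2,4), s(3,4),
          s(5,6), s(5,7), s(6,7), s(5,8), s(6,8), s(7,9), s(8,9),
          s(4,9)} : Finset (Sym2 (Fin 10)))}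
  ends := Subtype.val

/-- The Sylvester pseudo-graph `S₄` on 4 vertices: a central vertex 0 joined to
vertices 1, 2, 3 (edges `a = 0`, `b = 1`, `c = 2`), each of which carries a loop
(`a' = 3`, `b' = 4`, `c' = 5`). -/
def S4 : Multigraph where
  V := Fin 4
  E := Fin 6
  ends := ![s(0,1), s(0,2), s(0,3), s(1,1), s(2,2), s(3,3)]

/-! By Tutte's theorem it suffices to show that deleting any vertex set `S` leaves at most
`|S|` odd components. In a cubic (pseudo)graph the boundary `∂C` of a vertex set satisfies
`|∂C| ≡ 3|C| ≡ |C| (mod 2)`, so an odd component of `G - S` has an odd number of boundary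
edges, all of them ending in `S`. A component with a single boundary edge hangs on a bridge,
so at most two components send one edge to `S` and all others send at least three:
`3q - 4 ≤ 3|S|`, i.e. `q ≤ |S| + 1`. Since `|V|` is even, `q ≡ |S| (mod 2)`, hence
`q ≤ |S|`. -/

namespace Multigraph

variable (G : Multigraph)

def boundary (C : Finset G.V) : Finset G.E :=
  Finset.univ.filter fun e => ∃ a ∈ C, ∃ b ∉ C, G.ends e = s(a, b)

def toSimpleGraph : SimpleGraph G.V := SimpleGraph.fromEdgeSet (Set.range G.ends)

variable {G}

lemma incCount_eq_of_ends_eq {e : G.E} {a b : G.V} (he : G.ends e = s(a, b)) (v : G.V) :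
    G.incCount v e = (if v = a then 1 else 0) + (if v = b then 1 else 0) := by
  simp only [incCount, he, Sym2.diag, Sym2.eq_iff, Sym2.mem_iff]
  split_ifs <;> grind

lemma mem_boundary_iff_of_ends_eq {C : Finset G.V} {e : G.E} {a b : G.V}
    (he : G.ends e = s(a, b)) : e ∈ G.boundary C ↔ Xor (a ∈ C) (b ∈ C) := by
  simp only [boundary, Finset.mem_filter, Finset.mem_univ, true_and, he, Sym2.eq_iff]
  constructor
  · rintro ⟨x, hx, y, hy, ⟨rfl, rfl⟩ | ⟨rfl, rfl⟩⟩ <;> simp [Xor, hx, hy]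
  · rintro (⟨ha, hb⟩ | ⟨hb, ha⟩)
    · exact ⟨a, ha, b, hb, .inl ⟨rfl, rfl⟩⟩
    · exact ⟨b, hb, a, ha, .inr ⟨rfl, rfl⟩⟩

lemma sum_incCount_eq_ite_mem_boundary (C : Finset G.V) (e : G.E) :
    ∑ v ∈ C, (G.incCount v e : ZMod 2) = if e ∈ G.boundary C then 1 else 0 := by
  induction he : G.ends e using Sym2.ind with
  | _ a b =>
  simp only [incCount_eq_of_ends_eq he, mem_boundary_iff_of_ends_eq he, Nat.cast_add,
    Nat.cast_ite, Nat.cast_one, Nat.cast_zero, Finset.sum_add_distrib, Finset.sum_ite_eq']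
  by_cases ha : a ∈ C <;> by_cases hb : b ∈ C <;>
    simp [ha, hb, Xor, show (1 + 1 : ZMod 2) = 0 from rfl]

theorem card_boundary_cast_eq_sum_degree (C : Finset G.V) :
    ((G.boundary C).card : ZMod 2) = ∑ v ∈ C, (G.degree v : ZMod 2) := by
  simp only [degree, Nat.cast_sum]
  rw [Finset.sum_comm, Finset.sum_congr rfl fun e _ => sum_incCount_eq_ite_mem_boundary C e,
    Finset.sum_boole, Finset.filter_mem_eq_inter, Finset.univ_inter]

lemma card_boundary_mod_two_of_cubicPseudo (hG : G.CubicPseudo) (C : Finset G.V) :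
    (G.boundary C).card % 2 = C.card % 2 := by
  rw [← ZMod.natCast_eq_natCast_iff', card_boundary_cast_eq_sum_degree,
    Finset.sum_congr rfl fun v _ => by rw [hG v]]
  simp only [Finset.sum_const, nsmul_eq_mul]
  rw [show ((3 : ℕ) : ZMod 2) = 1 from rfl, mul_one]

lemma even_card_of_cubicPseudo (hG : G.CubicPseudo) : Even (Fintype.card G.V) := by
  have h := card_boundary_mod_two_of_cubicPseudo hG Finset.univ
  have h0 : G.boundary Finset.univ = ∅ := by simp [boundary]
  rw [h0, Finset.card_empty, Finset.card_univ] at h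
  exact Nat.even_iff.2 h.symm

lemma Reach.symm {A : Set G.E} {u w : G.V} (h : G.Reach A u w) : G.Reach A w u := by
  have : Std.Symm fun a b : G.V => ∃ e ∈ A, G.ends e = s(a, b) :=
    ⟨fun _ _ ⟨e, he, hab⟩ => ⟨e, he, hab.trans Sym2.eq_swap⟩⟩
  unfold Reach at *
  exact _root_.symm h

lemma mem_of_reach {A : Set G.E} {C : Finset G.V} (hA : ∀ e ∈ A, e ∉ G.boundary C)
    {u w : G.V} (hu : u ∈ C) (h : G.Reach A u w) : w ∈ C := by
  induction h with
  | refl => exact hu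
  | tail _ hstep ih =>
    obtain ⟨e, heA, he⟩ := hstep
    by_contra hw
    exact hA e heA ((mem_boundary_iff_of_ends_eq he).2 (.inl ⟨ih, hw⟩))

theorem isBridge_of_boundary_eq_singleton {C : Finset G.V} {e : G.E}
    (h : G.boundary C = {e}) : G.IsBridge e := by
  have he : e ∈ G.boundary C := h ▸ Finset.mem_singleton_self e
  obtain ⟨a, ha, b, hb, hab⟩ := (Finset.mem_filter.1 he).2
  have hA : ∀ e' ∈ {e' | e' ≠ e}, e' ∉ G.boundary C := by simp [h]
  have hnot : ¬ G.Reach {e' | e' ≠ e} a b := fun hr => hb (mem_of_reach hA ha hr)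
  intro u w huw
  rcases Sym2.eq_iff.1 (huw.symm.trans hab) with ⟨rfl, rfl⟩ | ⟨rfl, rfl⟩
  · exact hnot
  · exact fun hr => hnot hr.symm

lemma card_star_le_degree (v : G.V) : (G.star v).card ≤ G.degree v := by
  rw [star, Finset.card_filter]
  refine Finset.sum_le_sum fun e _ => ?_
  unfold incCount
  split_ifs <;> simp_all

section BoundaryCounting

open Function

variable {ι : Type*} {S : Finset G.V} {C : ι → Finset G.V}

lemma pairwise_disjoint_boundary (hC : Pairwise (Disjoint on C)) (hS : ∀ i, Disjoint (C i) S)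
    (hmeet : ∀ i, ∀ e ∈ G.boundary (C i), ∃ s ∈ S, s ∈ G.ends e) :
    Pairwise (Disjoint on fun i => G.boundary (C i)) := by
  intro i j hij
  rw [Function.onFun, Finset.disjoint_left]
  intro e hei hej
  obtain ⟨a, ha, b, hb, hab⟩ := (Finset.mem_filter.1 hei).2
  obtain ⟨a', ha', b', -, hab'⟩ := (Finset.mem_filter.1 hej).2
  obtain ⟨s, hs, hse⟩ := hmeet i e hei
  have ha'e : a' ∈ G.ends e := by simp [hab']
  rw [hab, Sym2.mem_iff] at ha'e hse
  rcases ha'e with rfl | rfl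
  · exact Finset.disjoint_left.1 (hC hij) ha ha'
  · rcases hse with rfl | rfl
    · exact Finset.disjoint_left.1 (hS i) ha hs
    · exact Finset.disjoint_left.1 (hS j) ha' hs

variable [Fintype ι]

lemma card_filter_boundary_eq_one_le (hC : Pairwise (Disjoint on C))
    (hS : ∀ i, Disjoint (C i) S)
    (hmeet : ∀ i, ∀ e ∈ G.boundary (C i), ∃ s ∈ S, s ∈ G.ends e) :
    (Finset.univ.filter fun i => (G.boundary (C i)).card = 1).card ≤
      {e : G.E | G.IsBridge e}.ncard := by
  set I := Finset.univ.filter fun i => (G.boundary (C i)).card = 1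
  have hunion : (I.biUnion fun i => G.boundary (C i)).card = I.card := by
    rw [Finset.card_biUnion fun i _ j _ hij => pairwise_disjoint_boundary hC hS hmeet hij,
      Finset.sum_congr rfl fun i hi => (Finset.mem_filter.1 hi).2, Finset.card_eq_sum_ones]
  have hbridges : (I.biUnion fun i => G.boundary (C i)) ⊆ Finset.univ.filter G.IsBridge := by
    intro e he
    obtain ⟨i, hi, hei⟩ := Finset.mem_biUnion.1 he
    obtain ⟨e', he'⟩ := Finset.card_eq_one.1 (Finset.mem_filter.1 hi).2
    rw [he', Finset.mem_singleton] at hei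
    exact Finset.mem_filter.2 ⟨Finset.mem_univ e, hei ▸ isBridge_of_boundary_eq_singleton he'⟩
  rw [← hunion, ← Finset.coe_filter_univ, Set.ncard_coe_finset]
  exact Finset.card_le_card hbridges

lemma sum_card_boundary_le_sum_degree (hC : Pairwise (Disjoint on C))
    (hS : ∀ i, Disjoint (C i) S)
    (hmeet : ∀ i, ∀ e ∈ G.boundary (C i), ∃ s ∈ S, s ∈ G.ends e) :
    ∑ i, (G.boundary (C i)).card ≤ ∑ s ∈ S, G.degree s := by
  have hsub : (Finset.univ.biUnion fun i => G.boundary (C i)) ⊆ S.biUnion G.star := by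
    intro e he
    obtain ⟨i, -, hei⟩ := Finset.mem_biUnion.1 he
    obtain ⟨s, hs, hse⟩ := hmeet i e hei
    exact Finset.mem_biUnion.2 ⟨s, hs, Finset.mem_filter.2 ⟨Finset.mem_univ e, hse⟩⟩
  calc ∑ i, (G.boundary (C i)).card
      = (Finset.univ.biUnion fun i => G.boundary (C i)).card :=
        (Finset.card_biUnion fun i _ j _ hij => pairwise_disjoint_boundary hC hS hmeet hij).symm
    _ ≤ (S.biUnion G.star).card := Finset.card_le_card hsub
    _ ≤ ∑ s ∈ S, (G.star s).card := Finset.card_biUnion_le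
    _ ≤ ∑ s ∈ S, G.degree s := Finset.sum_le_sum fun s _ => card_star_le_degree s

theorem CubicPseudo.card_le_card_add_one_of_odd_of_boundary_meets (hG : G.CubicPseudo)
    (hbr : {e : G.E | G.IsBridge e}.ncard ≤ 2) (hodd : ∀ i, Odd (C i).card)
    (hC : Pairwise (Disjoint on C)) (hS : ∀ i, Disjoint (C i) S)
    (hmeet : ∀ i, ∀ e ∈ G.boundary (C i), ∃ s ∈ S, s ∈ G.ends e) :
    Fintype.card ι ≤ S.card + 1 := by
  have hpiece : ∀ i,
      3 ≤ (G.boundary (C i)).card + if (G.boundary (C i)).card = 1 then 2 else 0 := by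
    intro i
    -- `∂(C i)` has odd size: it is a single edge or has at least three
    have := card_boundary_mod_two_of_cubicPseudo hG (C i)
    have := Nat.odd_iff.1 (hodd i)
    split_ifs <;> omega
  have hsum := Finset.sum_le_sum fun i (_ : i ∈ Finset.univ) => hpiece i
  rw [Finset.sum_add_distrib, Finset.sum_ite, Finset.sum_const_zero, add_zero,
    Finset.sum_const, smul_eq_mul, Finset.sum_const, smul_eq_mul, Finset.card_univ] at hsum
  have hbound := sum_card_boundary_le_sum_degree hC hS hmeet
  rw [Finset.sum_congr rfl fun s _ => hG s, Finset.sum_const, smul_eq_mul] at hbound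
  have := card_filter_boundary_eq_one_le hC hS hmeet
  omega

end BoundaryCounting

theorem exists_isPerfectMatching_of_toSimpleGraph {M : G.toSimpleGraph.Subgraph}
    (hM : M.IsPerfectMatching) : ∃ M' : Set G.E, G.IsPerfectMatching M' := by
  have hrange : ∀ p : M.edgeSet, ∃ e, G.ends e = p := fun p =>
    (SimpleGraph.edgeSet_fromEdgeSet _ ▸ M.edgeSet_subset p.2).1
  choose pick hpick using hrange
  have hedge : ∀ {v : G.V} (p : M.edgeSet), v ∈ (p : Sym2 G.V) →
      ∃ w, M.Adj v w ∧ p.1 = s(v, w) :=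
    fun {v} p hv => by
      obtain ⟨w, hw⟩ := Sym2.mem_iff_exists.1 hv
      exact ⟨w, (SimpleGraph.Subgraph.mem_edgeSet).1 (hw ▸ p.2), hw⟩
  refine ⟨Set.range pick, ?_, fun v => ?_⟩
  · rintro _ ⟨p, rfl⟩ _ ⟨q, rfl⟩ hpq ⟨v, hvp, hvq⟩
    rw [hpick] at hvp hvq
    obtain ⟨w, hvw, hp⟩ := hedge p hvp
    obtain ⟨w', hvw', hq⟩ := hedge q hvq
    obtain rfl := hM.1.eq_of_adj_left hvw hvw'
    exact hpq (congrArg pick (Subtype.ext (hp.trans hq.symm)))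
  · obtain ⟨w, hvw, -⟩ := hM.1 (hM.2 v)
    exact ⟨pick ⟨s(v, w), hvw⟩, ⟨_, rfl⟩, by simp [hpick]⟩

open SimpleGraph Function in
theorem CubicPseudo.ncard_oddComponents_deleteVerts_le (hG : G.CubicPseudo)
    (hbr : {e : G.E | G.IsBridge e}.ncard ≤ 2) (u : Set G.V) :
    ((⊤ : G.toSimpleGraph.Subgraph).deleteVerts u).coe.oddComponents.ncard ≤ u.ncard + 1 := by
  set K := ((⊤ : G.toSimpleGraph.Subgraph).deleteVerts u).coe
  let C : K.oddComponents → Finset G.V := fun c =>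
    c.1.supp.toFinset.map (Embedding.subtype _)
  have hmem : ∀ c v, v ∈ C c ↔ ∃ x ∈ c.1.supp, x.1 = v := fun c v => by
    simp [C]
  have hodd : ∀ c, Odd (C c).card := fun c => by
    rw [Finset.card_map, ← Set.ncard_eq_toFinset_card']
    exact c.2
  have hC : Pairwise (Disjoint on C) := fun c d hcd =>
    Finset.disjoint_map _ |>.2 <| Set.disjoint_toFinset.2 <|
      pairwise_disjoint_supp_connectedComponent K (Subtype.coe_injective.ne hcd)
  have hS : ∀ c, Disjoint (C c) u.toFinset := fun c => by
    rw [Finset.disjoint_left]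
    intro v hv
    obtain ⟨x, -, rfl⟩ := (hmem c v).1 hv
    simpa using x.2.2
  have hmeet : ∀ c, ∀ e ∈ G.boundary (C c), ∃ s ∈ u.toFinset, s ∈ G.ends e := by
    intro c e he
    obtain ⟨a, ha, b, hb, hab⟩ := (Finset.mem_filter.1 he).2
    refine ⟨b, ?_, by simp [hab]⟩
    by_contra hbu
    obtain ⟨x, hx, rfl⟩ := (hmem c a).1 ha
    let y : ((⊤ : G.toSimpleGraph.Subgraph).deleteVerts u).verts :=
      ⟨b, trivial, by simpa using hbu⟩
    have hxy : K.Adj x y := by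
      simp only [K, Subgraph.coe_adj, Subgraph.deleteVerts_adj, Subgraph.top_adj]
      exact ⟨trivial, x.2.2, trivial, y.2.2, (fromEdgeSet_adj _).2
        ⟨⟨e, hab⟩, fun h => hb (by rwa [← show x.1 = b from h])⟩⟩
    have hy : y ∈ c.1.supp :=
      (ConnectedComponent.connectedComponentMk_eq_of_adj hxy).symm.trans hx
    exact hb ((hmem c b).2 ⟨y, hy, rfl⟩)
  have := CubicPseudo.card_le_card_add_one_of_odd_of_boundary_meets hG hbr hodd hC hS hmeet
  rwa [← Set.ncard_eq_toFinset_card', ← Nat.card_eq_fintype_card, Nat.card_coe_set_eq] at this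

theorem CubicPseudo.even_ncard_oddComponents_deleteVerts_add (hG : G.CubicPseudo)
    (u : Set G.V) :
    Even (((⊤ : G.toSimpleGraph.Subgraph).deleteVerts u).coe.oddComponents.ncard + u.ncard) := by
  have hpar := SimpleGraph.odd_ncard_oddComponents
    ((⊤ : G.toSimpleGraph.Subgraph).deleteVerts u).coe
  have hverts : ((⊤ : G.toSimpleGraph.Subgraph).deleteVerts u).verts.ncard =
      Fintype.card G.V - u.ncard := by
    rw [SimpleGraph.Subgraph.deleteVerts_verts, SimpleGraph.Subgraph.verts_top,
      Set.ncard_sdiff (Set.subset_univ u), Set.ncard_univ, Nat.card_eq_fintype_card]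
  rw [Nat.card_coe_set_eq, hverts] at hpar
  have hV := Nat.even_iff.1 (even_card_of_cubicPseudo hG)
  have hu : u.ncard ≤ Fintype.card G.V := by
    rw [← Nat.card_eq_fintype_card, ← Set.ncard_univ]
    exact Set.ncard_le_ncard (Set.subset_univ u)
  rw [Nat.even_iff]
  simp only [Nat.odd_iff] at hpar
  omega

theorem CubicPseudo.not_isTutteViolator (hG : G.CubicPseudo)
    (hbr : {e : G.E | G.IsBridge e}.ncard ≤ 2) (u : Set G.V) :
    ¬ G.toSimpleGraph.IsTutteViolator u := by
  have hle := hG.ncard_oddComponents_deleteVerts_le hbr u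
  obtain ⟨r, hr⟩ := hG.even_ncard_oddComponents_deleteVerts_add u
  rw [SimpleGraph.IsTutteViolator, not_lt]
  omega

end Multigraph

/-- A cubic graph with at most two bridges has a perfect matching. -/
theorem cubic_at_most_two_bridges_has_perfect_matching (G : Multigraph)
    (hG : G.Cubic) (hbr : {e : G.E | G.IsBridge e}.ncard ≤ 2) :
    ∃ M : Set G.E, G.IsPerfectMatching M := by
  have hG' : G.CubicPseudo := hG.2
  obtain ⟨M, hM⟩ := SimpleGraph.tutte.2 (hG'.not_isTutteViolator hbr)
  exact Multigraph.exists_isPerfectMatching_of_toSimpleGraph hM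
end

section
/- Suppose G and H are cubic graphs and f is an H-coloring of G. Then for every bridge e of G, the edge f(e) is a bridge of H. -/
open scoped Classical

/-!
A bridge is exactly an edge lying in no even subgraph: removing `e` from an even edge set
containing it leaves a `T`-join between the ends of `e`, and a `{u, w}`-join contains a `u`–`w`
path (leave `u` along an edge of the join and recurse); conversely a path between the ends of `e`
avoiding `e`, closed up by `e`, is an even set. For cubic graphs an `H`-coloring maps every star
of `G` bijectively onto a star of `H`, so preimages of even subgraphs of `H` are even subgraphs
of `G`, and an even subgraph through `f e` pulls back to one through `e`.
-/

namespace Multigraph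

variable {X : Multigraph}

theorem cast_incCount_of_ends_eq {e : X.E} {a b : X.V} (h : X.ends e = s(a, b)) (v : X.V) :
    (X.incCount v e : ZMod 2) = (if v = a then 1 else 0) + (if v = b then 1 else 0) := by
  unfold incCount
  rw [h]
  rcases eq_or_ne v a with rfl | hva <;> rcases eq_or_ne v b with rfl | hvb
  · simp [Sym2.diag]; rfl
  · simp [Sym2.diag, hvb, hvb.symm]
  · simp [Sym2.diag, hva, hva.symm]
  · simp [Sym2.diag, hva, hvb, hva.symm]

theorem degIn_insert {A : Set X.E} {e : X.E} (he : e ∉ A) (v : X.V) :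
    X.degIn (insert e A) v = X.degIn A v + X.incCount v e := by
  rw [degIn, degIn, ← Fintype.sum_ite_eq' e (X.incCount v), ← Finset.sum_add_distrib]
  refine Finset.sum_congr rfl fun e' _ => ?_
  by_cases h : e' = e
  · subst h; simp [he]
  · simp [h]

theorem exists_mem_ends_of_degIn_ne_zero {A : Set X.E} {v : X.V} (h : X.degIn A v ≠ 0) :
    ∃ e ∈ A, v ∈ X.ends e := by
  obtain ⟨e, -, hne⟩ := Finset.exists_ne_zero_of_sum_ne_zero h
  refine ⟨e, by_contra fun heA => hne (if_neg heA), ?_⟩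
  by_contra hv
  refine hne (ite_eq_right_iff.mpr fun _ => ?_)
  rw [incCount, if_neg (fun hd : X.ends e = Sym2.diag v => hv (hd ▸ Sym2.mem_mk_left v v)),
    if_neg hv]

theorem degIn_eq_card_filter_star (hX : X.Loopless) (A : Set X.E) (v : X.V) :
    X.degIn A v = ((X.star v).filter (· ∈ A)).card := by
  rw [star, Finset.filter_filter, Finset.card_filter, degIn]
  refine Finset.sum_congr rfl fun e _ => ?_
  rw [incCount, if_neg (fun hd : X.ends e = Sym2.diag v => hX e (hd ▸ Sym2.diag_isDiag v))]
  by_cases heA : e ∈ A <;> by_cases hv : v ∈ X.ends e <;> simp [heA, hv]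

theorem Cubic.card_star (hX : X.Cubic) (v : X.V) : (X.star v).card = 3 := by
  have h := degIn_eq_card_filter_star hX.1 Set.univ v
  simp only [Set.mem_univ, Finset.filter_true] at h
  rw [← h, ← hX.2 v]
  simp [degIn, degree]

/-- `B` is a `T`-join for `T = {u, w}`. -/
def IsJoin (B : Set X.E) (u w : X.V) : Prop :=
  ∀ v, (X.degIn B v : ZMod 2) = (if v = u then 1 else 0) + (if v = w then 1 else 0)

theorem IsJoin.symm {B : Set X.E} {u w : X.V} (h : X.IsJoin B u w) : X.IsJoin B w u :=
  fun v => (h v).trans (add_comm _ _)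

theorem isJoin_self_iff_evenSubgraph {B : Set X.E} {u : X.V} :
    X.IsJoin B u u ↔ X.EvenSubgraph B := by
  simp only [IsJoin, EvenSubgraph, CharTwo.add_self_eq_zero, ZMod.natCast_eq_zero_iff_even]

theorem isJoin_insert_iff {B : Set X.E} {e : X.E} {u w z : X.V} (he : e ∉ B)
    (hends : X.ends e = s(w, z)) : X.IsJoin (insert e B) u z ↔ X.IsJoin B u w := by
  refine forall_congr' fun v => ?_
  rw [degIn_insert he, Nat.cast_add, cast_incCount_of_ends_eq hends]
  constructor <;> intro h <;> linear_combination (norm := (ring_nf; reduce_mod_char)) h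

theorem IsJoin.diff_singleton {B : Set X.E} {e : X.E} {u w z : X.V} (h : X.IsJoin B u w)
    (he : e ∈ B) (hends : X.ends e = s(w, z)) : X.IsJoin (B \ {e}) u z := by
  rw [← isJoin_insert_iff (fun h => h.2 rfl) (hends.trans Sym2.eq_swap),
    Set.insert_sdiff_singleton, Set.insert_eq_of_mem he]
  exact h

theorem Reach.mono {A A' : Set X.E} (hA : A ⊆ A') {u w : X.V} (h : X.Reach A u w) :
    X.Reach A' u w :=
  Relation.ReflTransGen.mono (fun _ _ ⟨e, he, hends⟩ => ⟨e, hA he, hends⟩) _ _ h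

theorem Reach.exists_isJoin {A : Set X.E} {u w : X.V} (h : X.Reach A u w) :
    ∃ B ⊆ A, X.IsJoin B u w := by
  induction h with
  | refl =>
    exact ⟨∅, Set.empty_subset A, isJoin_self_iff_evenSubgraph.mpr fun v => by simp [degIn]⟩
  | tail _ hstep ih =>
    obtain ⟨B, hBA, hB⟩ := ih
    obtain ⟨e, heA, hends⟩ := hstep
    by_cases heB : e ∈ B
    · exact ⟨B \ {e}, Set.sdiff_subset.trans hBA, hB.diff_singleton heB hends⟩
    · exact ⟨insert e B, Set.insert_subset heA hBA, (isJoin_insert_iff heB hends).mpr hB⟩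

theorem IsJoin.reach {B : Set X.E} {u w : X.V} (h : X.IsJoin B u w) : X.Reach B u w := by
  induction hn : B.ncard using Nat.strong_induction_on generalizing B u with
  | _ n ih =>
    rcases eq_or_ne u w with rfl | huw
    · exact Relation.ReflTransGen.refl
    have hu : X.degIn B u ≠ 0 := fun h0 => by simpa [huw, h0] using h u
    obtain ⟨e, heB, hue⟩ := exists_mem_ends_of_degIn_ne_zero hu
    obtain ⟨b, hends⟩ := Sym2.mem_iff_exists.mp hue
    have hrest : X.Reach (B \ {e}) b w :=
      ih _ (hn ▸ Set.ncard_sdiff_singleton_lt_of_mem heB)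
        (h.symm.diff_singleton heB hends).symm rfl
    exact .head ⟨e, heB, hends⟩ (hrest.mono Set.sdiff_subset)

theorem isBridge_iff_forall_evenSubgraph {e : X.E} :
    X.IsBridge e ↔ ∀ C, X.EvenSubgraph C → e ∉ C := by
  constructor
  · intro hbridge C hC heC
    obtain ⟨⟨a, b⟩, hab⟩ := Quot.exists_rep (X.ends e)
    have hjoin := (isJoin_self_iff_evenSubgraph.mpr hC).diff_singleton heC hab.symm
    exact hbridge a b hab.symm (hjoin.reach.mono fun _ h => h.2)
  · intro h u w hends hreach
    obtain ⟨B, hBA, hB⟩ := hreach.exists_isJoin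
    have heB : e ∉ B := fun heB => hBA heB rfl
    have hjoin := (isJoin_insert_iff heB (hends.trans Sym2.eq_swap)).mpr hB
    exact h _ (isJoin_self_iff_evenSubgraph.mp hjoin) (Set.mem_insert e B)

namespace IsHColoring

variable {G H : Multigraph} {f : G.E → H.E}

theorem degIn_preimage (hG : G.Loopless) (hH : H.Loopless) {x : G.V} {y : H.V}
    (hxy : (G.star x).image f = H.star y) (hinj : Set.InjOn f (G.star x)) (C : Set H.E) :
    G.degIn (f ⁻¹' C) x = H.degIn C y := by
  rw [degIn_eq_card_filter_star hG, degIn_eq_card_filter_star hH, ← hxy, Finset.filter_image,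
    Finset.card_image_of_injOn (hinj.mono (Finset.filter_subset _ _))]
  rfl

theorem evenSubgraph_preimage (hG : G.Cubic) (hH : H.Cubic) (hf : IsHColoring G H f)
    {C : Set H.E} (hC : H.EvenSubgraph C) : G.EvenSubgraph (f ⁻¹' C) := by
  intro x
  obtain ⟨y, hxy⟩ := hf x
  have hinj : Set.InjOn f (G.star x) :=
    Finset.card_image_iff.mp (by rw [hxy, hH.card_star, hG.card_star])
  rw [degIn_preimage hG.1 hH.1 hxy hinj]
  exact hC y

end IsHColoring

end Multigraph

/-- an H-coloring maps bridges of G to bridges of H. -/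
theorem hcoloring_image_of_bridge_is_bridge (G H : Multigraph) (hG : G.Cubic)
    (hH : H.Cubic) (f : G.E → H.E) (hf : Multigraph.IsHColoring G H f)
    (e : G.E) (he : G.IsBridge e) : H.IsBridge (f e) := by
  rw [Multigraph.isBridge_iff_forall_evenSubgraph] at he ⊢
  exact fun C hC hfe => he _ (hf.evenSubgraph_preimage hG hH hC) hfe
end

section
/- Let H be a triangle-free cubic graph and G a cubic graph. If f: E(G) → E(H) is a map such that for any two adjacent edges e, e' of G the edges f(e), f(e') of H are adjacent, then f is an H-coloring of G. -/
open scoped Classical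

/-!
The three edges at a vertex `x` of `G` are pairwise adjacent, so their images are three distinct,
pairwise adjacent edges of `H`. Pairwise adjacent edges without a common vertex would span a
triangle, so in the triangle-free graph `H` they all meet in some vertex `y`. Thus `f` maps
`∂_G(x)` injectively into `∂_H(y)`, and both sets have three elements.
-/

namespace Multigraph

variable (G : Multigraph)

@[simp]
lemma mem_star {v : G.V} {e : G.E} : e ∈ G.star v ↔ v ∈ G.ends e := by
  simp [star]

lemma card_star_of_loopless (hG : G.Loopless) (v : G.V) : (G.star v).card = G.degree v := by
  rw [star, Finset.card_filter, degree]
  refine Finset.sum_congr rfl fun e _ => ?_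
  have hne : G.ends e ≠ Sym2.diag v := fun h => hG e (h ▸ Sym2.diag_isDiag v)
  rw [incCount, if_neg hne]

lemma card_star_of_cubic (hG : G.Cubic) (v : G.V) : (G.star v).card = 3 :=
  (G.card_star_of_loopless hG.1 v).trans (hG.2 v)

variable {G}

lemma edgeAdj_of_mem_star {v : G.V} {e e' : G.E} (he : e ∈ G.star v) (he' : e' ∈ G.star v)
    (hne : e ≠ e') : G.EdgeAdj e e' :=
  ⟨hne, v, G.mem_star.1 he, G.mem_star.1 he'⟩

lemma TriangleFree.exists_common_vertex (htf : G.TriangleFree) {a b c : G.E}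
    (hab : ∃ v, v ∈ G.ends a ∧ v ∈ G.ends b) (hbc : ∃ v, v ∈ G.ends b ∧ v ∈ G.ends c)
    (hac : ∃ v, v ∈ G.ends a ∧ v ∈ G.ends c) :
    ∃ y, y ∈ G.ends a ∧ y ∈ G.ends b ∧ y ∈ G.ends c := by
  obtain ⟨u, hua, hub⟩ := hab
  obtain ⟨v, hvb, hvc⟩ := hbc
  obtain ⟨w, hwa, hwc⟩ := hac
  by_cases huv : u = v
  · exact ⟨u, hua, hub, huv ▸ hvc⟩
  by_cases huw : u = w
  · exact ⟨u, hua, hub, huw ▸ hwc⟩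
  by_cases hvw : v = w
  · exact ⟨v, hvw ▸ hwa, hvb, hvc⟩
  exact (htf ⟨b, c, a, u, v, w, huv, hvw, huw, (Sym2.mem_and_mem_iff huv).1 ⟨hub, hvb⟩,
    (Sym2.mem_and_mem_iff hvw).1 ⟨hvc, hwc⟩, (Sym2.mem_and_mem_iff huw).1 ⟨hua, hwa⟩⟩).elim

end Multigraph

/-- if H is triangle-free, any adjacency-preserving map
f : E(G) → E(H) is an H-coloring of G. -/
theorem adjacency_preserving_is_hcoloring_of_triangle_free (G H : Multigraph)
    (hG : G.Cubic) (hH : H.Cubic) (htf : H.TriangleFree) (f : G.E → H.E)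
    (hadj : ∀ e e' : G.E, G.EdgeAdj e e' → H.EdgeAdj (f e) (f e')) :
    Multigraph.IsHColoring G H f := by
  intro x
  have hadj_star : ∀ e ∈ G.star x, ∀ e' ∈ G.star x, e ≠ e' → H.EdgeAdj (f e) (f e') :=
    fun e he e' he' hne => hadj e e' (Multigraph.edgeAdj_of_mem_star he he' hne)
  have hinj : Set.InjOn f (G.star x) := fun e he e' he' hf =>
    by_contra fun hne => (hadj_star e he e' he' hne).1 hf
  obtain ⟨e₁, e₂, e₃, h₁₂, h₁₃, h₂₃, hstar⟩ := Finset.card_eq_three.mp (G.card_star_of_cubic hG x)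
  obtain ⟨hx₁, hx₂, hx₃⟩ : e₁ ∈ G.star x ∧ e₂ ∈ G.star x ∧ e₃ ∈ G.star x := by simp [hstar]
  obtain ⟨y, hy₁, hy₂, hy₃⟩ := htf.exists_common_vertex (hadj_star _ hx₁ _ hx₂ h₁₂).2
    (hadj_star _ hx₂ _ hx₃ h₂₃).2 (hadj_star _ hx₁ _ hx₃ h₁₃).2
  refine ⟨y, Finset.eq_of_subset_of_card_le ?_ ?_⟩
  · simp only [hstar, Finset.image_insert, Finset.image_singleton, Finset.insert_subset_iff,
      Finset.singleton_subset_iff, Multigraph.mem_star]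
    exact ⟨hy₁, hy₂, hy₃⟩
  · rw [Finset.card_image_of_injOn hinj, G.card_star_of_cubic hG, H.card_star_of_cubic hH]
end
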